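/- arXiv:1112.0993 — 7 statements merged into one kernel-verified Lean document; each statement's English description precedes it below -/
import Mathlib

section
/- Let r, n ∈ ℕ with n ≥ 1 and F(r) ≤ n. Then (r : ℝ) ≤ 1.45 · log₂(n) + 2. -/
/-!
Since `φ ^ m ≤ F (m + 2)`, the hypothesis `F r ≤ n` gives
`r - 2 ≤ log_φ n = log₂ n / log₂ φ`, and `1 / log₂ φ ≈ 1.4404 ≤ 1.45` because
`2 ^ 20 ≤ 1.618 ^ 29 ≤ φ ^ 29`.
-/

open Real goldenRatio

theorem Real.goldenRatio_pow_le_fib_add_two (m : ℕ) : φ ^ m ≤ Nat.fib (m + 2) := by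
  have hfib : (Nat.fib m : ℝ) ≤ φ * Nat.fib m :=
    le_mul_of_one_le_left (by positivity) one_lt_goldenRatio.le
  refine le_of_mul_le_mul_left ?_ goldenRatio_pos
  rw [← pow_succ', ← goldenRatio_mul_fib_succ_add_fib, Nat.fib_add_two, Nat.cast_add, mul_add]
  linarith

theorem Real.le_logb_goldenRatio_of_fib_add_two_le {m n : ℕ} (h : Nat.fib (m + 2) ≤ n) :
    (m : ℝ) ≤ logb φ n := by
  have hn : (0 : ℝ) < n := by
    exact_mod_cast (Nat.fib_pos.mpr (Nat.succ_pos _)).trans_le h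
  rw [le_logb_iff_rpow_le one_lt_goldenRatio hn, rpow_natCast]
  exact (goldenRatio_pow_le_fib_add_two m).trans (by exact_mod_cast h)

theorem Real.log_two_le_mul_log_goldenRatio : log 2 ≤ 1.45 * log φ := by
  have hφ : (1.618 : ℝ) ≤ φ := by
    have : (2.236 : ℝ) ≤ √5 := le_sqrt_of_sq_le (by norm_num)
    rw [goldenRatio]
    linarith
  have hpow : (2 : ℝ) ^ 20 ≤ φ ^ 29 :=
    calc (2 : ℝ) ^ 20 ≤ 1.618 ^ 29 := by norm_num
      _ ≤ φ ^ 29 := by gcongr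
  have hlog := log_le_log (by positivity) hpow
  rw [log_pow, log_pow] at hlog
  push_cast at hlog
  linarith

theorem Real.logb_goldenRatio_le_mul_logb_two {x : ℝ} (hx : 1 ≤ x) :
    logb φ x ≤ 1.45 * logb 2 x := by
  have hlogx : 0 ≤ log x := log_nonneg hx
  have hlog2 : 0 < log 2 := log_pos one_lt_two
  have hlogφ : 0 < log φ := log_pos one_lt_goldenRatio
  rw [logb, logb, div_le_iff₀ hlogφ, mul_div_assoc', div_mul_eq_mul_div, le_div_iff₀ hlog2]
  nlinarith [log_two_le_mul_log_goldenRatio]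

theorem stmt_3_general (r n : ℕ) (h : Nat.fib r ≤ n) :
    (r : ℝ) ≤ 1.45 * Real.logb 2 n + 2 := by
  have hlogn : 0 ≤ logb 2 n := div_nonneg (log_natCast_nonneg n) (log_nonneg one_le_two)
  rcases le_or_gt r 2 with hr | hr
  · have : (r : ℝ) ≤ 2 := by exact_mod_cast hr
    linarith
  · obtain ⟨m, rfl⟩ : ∃ m, r = m + 2 := ⟨r - 2, by omega⟩
    have hn : (1 : ℝ) ≤ n := by exact_mod_cast (Nat.fib_pos.mpr (by omega)).trans_le h
    have hm : (m : ℝ) ≤ 1.45 * logb 2 n :=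
      (le_logb_goldenRatio_of_fib_add_two_le h).trans (logb_goldenRatio_le_mul_logb_two hn)
    push_cast
    linarith

/-- If `n ≥ 1` and `F r ≤ n`, then `(r : ℝ) ≤ 1.45 · log₂ n + 2`. -/
theorem stmt_3 (r n : ℕ) (hn : 1 ≤ n) (h : Nat.fib r ≤ n) :
    (r : ℝ) ≤ 1.45 * Real.logb 2 n + 2 :=
  stmt_3_general r n h
end

section
/- Let d = ⟨d_0, …, d_{ℓ−1}⟩ be an extended regular digit string and let j ≤ ℓ − 1 satisfy d_j = 3. Then fix-carry(d, j) is again a digit string (all digits at most 3) and is extended regular; moreover, if the last digit of d is nonzero then the last digit of fix-carry(d, j) is nonzero. -/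
/-- The value `Σ_{i<ℓ} d_i · 2^i` of a digit string. -/
def digitVal (d : List ℕ) : ℕ := ∑ i ∈ Finset.range d.length, d.getD i 0 * 2 ^ i

/-- A digit string `⟨d_0, …, d_{ℓ−1}⟩` is extended regular if
(i) every `3` is preceded by a `0` or a `1` with only `2`'s in between, and
(ii) every `0` is preceded by a `2` or a `3` with only `1`'s in between. -/
def ExtReg (d : List ℕ) : Prop :=
  (∀ j < d.length, d.getD j 0 = 3 →
      ∃ k < j, (d.getD k 0 = 0 ∨ d.getD k 0 = 1) ∧
        ∀ m, k < m → m < j → d.getD m 0 = 2) ∧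
  (∀ j < d.length, d.getD j 0 = 0 →
      ∃ k < j, (d.getD k 0 = 2 ∨ d.getD k 0 = 3) ∧
        ∀ m, k < m → m < j → d.getD m 0 = 1)

/-- Fix-carry at position `j` (assuming `d_j = 3`): set `d_j := 1` and increase
`d_{j+1}` by one, appending a new digit `1` if `j` is the last position. -/
def fixCarry (d : List ℕ) (j : ℕ) : List ℕ :=
  if j + 1 < d.length then (d.set j 1).set (j + 1) (d.getD (j + 1) 0 + 1)
  else d.set j 1 ++ [1]

theorem getD_set' (l : List ℕ) (i p a : ℕ) :
    (l.set i a).getD p 0 = if p = i ∧ i < l.length then a else l.getD p 0 := by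
  rcases Decidable.em (p = i ∧ i < l.length) with h | h
  · rw [if_pos h, h.1, List.getD_eq_getElem?_getD, List.getElem?_set_self',
      List.getElem?_eq_getElem (h.1 ▸ h.2)]
    rfl
  · rw [if_neg h]
    rcases Decidable.em (p = i) with h' | hne
    · subst h'
      have h2 : ¬ p < l.length := fun hh => h ⟨rfl, hh⟩
      simp [List.getD_eq_getElem?_getD, List.getElem?_eq_none (by omega : l.length ≤ p),
        List.getElem?_eq_none (show (l.set p a).length ≤ p by simpa using by omega)]
    · simp [List.getD_eq_getElem?_getD, List.getElem?_set_ne (fun hh => hne hh.symm)]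
theorem getD_app' (l : List ℕ) (p a : ℕ) :
    (l ++ [a]).getD p 0 = if p = l.length then a else l.getD p 0 := by
  rcases lt_trichotomy p l.length with h | h | h
  · rw [if_neg (by omega), List.getD_eq_getElem?_getD, List.getElem?_append, if_pos h,
      ← List.getD_eq_getElem?_getD]
  · subst h
    simp [List.getD_eq_getElem?_getD, List.getElem?_append_right (le_refl _)]
  · rw [if_neg (by omega), List.getD_eq_getElem?_getD,
      List.getElem?_eq_none (by simp; omega), List.getD_eq_getElem?_getD,
      List.getElem?_eq_none (by omega)]
theorem getLastD_eq' (l : List ℕ) : l.getLastD 0 = l.getD (l.length - 1) 0 := by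
  rw [List.getLastD_eq_getLast?, List.getLast?_eq_getElem?, List.getD_eq_getElem?_getD]

/-- A fix-carry keeps the representation an extended regular digit string, and
preserves the property that the last digit is nonzero. -/
theorem stmt_8 (d : List ℕ) (j : ℕ) (hj : j ≤ d.length - 1)
    (hdig : ∀ x ∈ d, x ≤ 3) (hreg : ExtReg d) (h3 : d.getD j 0 = 3) :
    (∀ x ∈ fixCarry d j, x ≤ 3) ∧ ExtReg (fixCarry d j) ∧
      (d.getLastD 0 ≠ 0 → (fixCarry d j).getLastD 0 ≠ 0) := by
  obtain ⟨hr3, hr0⟩ := hreg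
  have hjlen : j < d.length := by
    by_contra hc
    rw [List.getD_eq_default _ _ (by omega)] at h3; omega
  have hle : ∀ p, d.getD p 0 ≤ 3 := by
    intro p
    rcases Decidable.em (p < d.length) with h | h
    · rw [List.getD_eq_getElem _ _ h]; exact hdig _ (List.getElem_mem h)
    · rw [List.getD_eq_default _ _ (by omega)]; omega
  by_cases hcase : j + 1 < d.length
  · -- interior case
    have h2 : d.getD (j + 1) 0 ≤ 2 := by
      by_contra hc
      have h31 : d.getD (j + 1) 0 = 3 := by have := hle (j + 1); omega
      obtain ⟨k, hk, hk01, hbet⟩ := hr3 (j + 1) hcase h31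
      rcases Decidable.em (k = j) with rfl | hne
      · omega
      · have := hbet j (by omega) (by omega); omega
    have hget : ∀ p, (fixCarry d j).getD p 0 =
        if p = j then 1 else if p = j + 1 then d.getD (j + 1) 0 + 1 else d.getD p 0 := by
      intro p
      rw [fixCarry, if_pos hcase, getD_set', getD_set']
      simp only [List.length_set]
      rcases Decidable.em (p = j) with rfl | h0
      · rw [if_neg (by omega), if_pos ⟨rfl, hjlen⟩, if_pos rfl]
      · rcases Decidable.em (p = j + 1) with rfl | h1
        · rw [if_pos ⟨rfl, hcase⟩, if_neg h0, if_pos rfl]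
        · rw [if_neg (by tauto), if_neg (by tauto), if_neg h0, if_neg h1]
    have hlen : (fixCarry d j).length = d.length := by
      rw [fixCarry, if_pos hcase]; simp
    refine ⟨?_, ⟨?_, ?_⟩, ?_⟩
    · intro x hx
      rw [fixCarry, if_pos hcase] at hx
      rcases List.mem_or_eq_of_mem_set hx with hx | rfl
      · rcases List.mem_or_eq_of_mem_set hx with hx | rfl
        · exact hdig _ hx
        · omega
      · omega
    · -- condition (i): 3's
      intro p hp hp3
      rw [hget] at hp3
      rw [hlen] at hp
      rcases Decidable.em (p = j) with rfl | hpj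
      · simp at hp3
      rcases Decidable.em (p = j + 1) with rfl | hpj1
      · rw [if_neg hpj, if_pos rfl] at hp3
        exact ⟨j, by omega, Or.inr (by rw [hget, if_pos rfl]), fun m h1 h2 => by omega⟩
      rw [if_neg hpj, if_neg hpj1] at hp3
      obtain ⟨k, hk, hk01, hbet⟩ := hr3 p hp hp3
      rcases Nat.lt_or_ge p j with hplt | hpge
      · -- p < j : everything below p unchanged
        exact ⟨k, hk, by rw [hget, if_neg (by omega), if_neg (by omega)]; exact hk01,
          fun m h1 h2 => by rw [hget, if_neg (by omega), if_neg (by omega)]; exact hbet m h1 h2⟩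
      · have hpgt : j + 1 < p := by omega
        have hkge : j ≤ k := by
          by_contra hc
          have := hbet j (by omega) (by omega); omega
        have hkne : k ≠ j := by rintro rfl; omega
        rcases Decidable.em (k = j + 1) with rfl | hkj1
        · rcases hk01 with h0 | h1
          · -- d_{j+1} = 0, new digit there is 1
            exact ⟨j + 1, hk, Or.inr (by rw [hget, if_neg (by omega), if_pos rfl, h0]),
              fun m hm1 hm2 => by
                rw [hget, if_neg (by omega), if_neg (by omega)]; exact hbet m hm1 hm2⟩
          · -- d_{j+1} = 1, new digit is 2; use j as witness
            refine ⟨j, by omega, Or.inr (by rw [hget, if_pos rfl]), fun m hm1 hm2 => ?_⟩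
            rw [hget, if_neg (by omega)]
            rcases Decidable.em (m = j + 1) with rfl | hm
            · rw [if_pos rfl, h1]
            · rw [if_neg hm]; exact hbet m (by omega) hm2
        · have hkgt : j + 1 < k := by omega
          exact ⟨k, hk, by rw [hget, if_neg (by omega), if_neg (by omega)]; exact hk01,
            fun m hm1 hm2 => by
              rw [hget, if_neg (by omega), if_neg (by omega)]; exact hbet m hm1 hm2⟩
    · -- condition (ii): 0's
      intro p hp hp0
      rw [hget] at hp0
      rw [hlen] at hp
      rcases Decidable.em (p = j) with rfl | hpj
      · simp at hp0
      rcases Decidable.em (p = j + 1) with rfl | hpj1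
      · rw [if_neg hpj, if_pos rfl] at hp0; omega
      rw [if_neg hpj, if_neg hpj1] at hp0
      obtain ⟨k, hk, hk23, hbet⟩ := hr0 p hp hp0
      rcases Nat.lt_or_ge p j with hplt | hpge
      · exact ⟨k, hk, by rw [hget, if_neg (by omega), if_neg (by omega)]; exact hk23,
          fun m h1 h2 => by rw [hget, if_neg (by omega), if_neg (by omega)]; exact hbet m h1 h2⟩
      · have hpgt : j + 1 < p := by omega
        have hkge : j ≤ k := by
          by_contra hc
          have := hbet j (by omega) (by omega); omega
        rcases Decidable.em (k = j) with hkj | hkj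
        · -- witness was j itself; use j+1, which held 1, now 2
          have hj1 : d.getD (j + 1) 0 = 1 := hbet (j + 1) (by omega) (by omega)
          refine ⟨j + 1, by omega, Or.inl (by rw [hget, if_neg (by omega), if_pos rfl, hj1]),
            fun m hm1 hm2 => ?_⟩
          rw [hget, if_neg (by omega), if_neg (by omega)]; exact hbet m (by omega) hm2
        rcases Decidable.em (k = j + 1) with rfl | hkj1
        · -- d_{j+1} ∈ {2,3} and ≤ 2 so = 2; new digit 3
          have : d.getD (j + 1) 0 = 2 := by omega
          exact ⟨j + 1, hk, Or.inr (by rw [hget, if_neg (by omega), if_pos rfl, this]),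
            fun m hm1 hm2 => by
              rw [hget, if_neg (by omega), if_neg (by omega)]; exact hbet m hm1 hm2⟩
        · have hkgt : j + 1 < k := by omega
          exact ⟨k, hk, by rw [hget, if_neg (by omega), if_neg (by omega)]; exact hk23,
            fun m hm1 hm2 => by
              rw [hget, if_neg (by omega), if_neg (by omega)]; exact hbet m hm1 hm2⟩
    · -- last digit
      intro hlast
      rw [getLastD_eq', hlen, hget]
      rw [getLastD_eq'] at hlast
      rcases Decidable.em (d.length - 1 = j) with h | h
      · rw [if_pos h]; omega
      rcases Decidable.em (d.length - 1 = j + 1) with h' | h'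
      · rw [if_neg h, if_pos h']; omega
      · rw [if_neg h, if_neg h']; exact hlast
  · -- append case: j = d.length - 1
    have hjeq : j = d.length - 1 := by omega
    have hget : ∀ p, (fixCarry d j).getD p 0 =
        if p = j then 1 else if p = d.length then 1 else d.getD p 0 := by
      intro p
      rw [fixCarry, if_neg hcase, getD_app', getD_set']
      simp only [List.length_set]
      rcases Decidable.em (p = j) with rfl | h0
      · rw [if_neg (by omega), if_pos ⟨rfl, hjlen⟩, if_pos rfl]
      · rcases Decidable.em (p = d.length) with rfl | h1
        · rw [if_pos rfl, if_neg h0, if_pos rfl]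
        · rw [if_neg h1, if_neg (by tauto), if_neg h0, if_neg h1]
    have hlen : (fixCarry d j).length = d.length + 1 := by
      rw [fixCarry, if_neg hcase]; simp
    refine ⟨?_, ⟨?_, ?_⟩, ?_⟩
    · intro x hx
      rw [fixCarry, if_neg hcase, List.mem_append] at hx
      rcases hx with hx | hx
      · rcases List.mem_or_eq_of_mem_set hx with hx | rfl
        · exact hdig _ hx
        · omega
      · simp at hx; omega
    · intro p hp hp3
      rw [hget] at hp3
      rw [hlen] at hp
      rcases Decidable.em (p = j) with rfl | hpj
      · simp at hp3
      rcases Decidable.em (p = d.length) with rfl | hpl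
      · rw [if_neg hpj, if_pos rfl] at hp3; omega
      rw [if_neg hpj, if_neg hpl] at hp3
      have hplt : p < j := by omega
      obtain ⟨k, hk, hk01, hbet⟩ := hr3 p (by omega) hp3
      exact ⟨k, hk, by rw [hget, if_neg (by omega), if_neg (by omega)]; exact hk01,
        fun m h1 h2 => by rw [hget, if_neg (by omega), if_neg (by omega)]; exact hbet m h1 h2⟩
    · intro p hp hp0
      rw [hget] at hp0
      rw [hlen] at hp
      rcases Decidable.em (p = j) with rfl | hpj
      · simp at hp0
      rcases Decidable.em (p = d.length) with rfl | hpl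
      · rw [if_neg hpj, if_pos rfl] at hp0; omega
      rw [if_neg hpj, if_neg hpl] at hp0
      have hplt : p < j := by omega
      obtain ⟨k, hk, hk23, hbet⟩ := hr0 p (by omega) hp0
      exact ⟨k, hk, by rw [hget, if_neg (by omega), if_neg (by omega)]; exact hk23,
        fun m h1 h2 => by rw [hget, if_neg (by omega), if_neg (by omega)]; exact hbet m h1 h2⟩
    · intro _
      rw [getLastD_eq', hlen]
      have h1 : d.length + 1 - 1 = d.length := by omega
      rw [h1, hget, if_neg (by omega), if_pos rfl]
      omega
end

section
/- Let d = ⟨d_0, …, d_{ℓ−1}⟩ be an extended regular digit string and let j satisfy j + 1 ≤ ℓ − 1 and d_j = 0. Then d_{j+1} ≥ 1, and the string fix-borrow(d, j) has the same value as d, i.e. Σ_i d'_i·2^i = Σ_i d_i·2^i where d' = fix-borrow(d, j). -/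
/-- Remove all trailing zero digits of a digit string. -/
def stripTrailingZeros (d : List ℕ) : List ℕ :=
  (d.reverse.dropWhile (· = 0)).reverse

/-- Fix-borrow at position `j` (assuming `d_j = 0` and `j + 1` is a valid
position): set `d_j := 2`, decrease `d_{j+1}` by one, and remove any trailing
zero digits. -/
def fixBorrow (d : List ℕ) (j : ℕ) : List ℕ :=
  stripTrailingZeros ((d.set j 2).set (j + 1) (d.getD (j + 1) 0 - 1))

/-! A `0` at position `j + 1` would need a `2` or `3` before it with only `1`'s in between,
but its left neighbour is the `0` at position `j`; so `d_{j+1} ≥ 1`. The borrow then moves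
`2^(j+1)` from digit `j + 1` to digit `j` as `2 · 2^j`, and dropping trailing zeros never
changes the value. -/

lemma digitVal_nil : digitVal [] = 0 := rfl

lemma digitVal_cons (a : ℕ) (t : List ℕ) : digitVal (a :: t) = a + 2 * digitVal t := by
  rw [digitVal, digitVal, List.length_cons, Finset.sum_range_succ', Finset.mul_sum]
  simp only [List.getD_cons_succ, List.getD_cons_zero, pow_succ, pow_zero, mul_one]
  rw [add_comm]
  exact congrArg (a + ·) (Finset.sum_congr rfl fun i _ => by ring)

lemma digitVal_append (l t : List ℕ) :
    digitVal (l ++ t) = digitVal l + 2 ^ l.length * digitVal t := by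
  induction l with
  | nil => simp [digitVal_nil]
  | cons a l ih => simp only [List.cons_append, digitVal_cons, ih, List.length_cons]; ring

lemma digitVal_eq_zero_of_forall_eq_zero {t : List ℕ} (h : ∀ x ∈ t, x = 0) :
    digitVal t = 0 := by
  induction t with
  | nil => rfl
  | cons a t ih =>
    rw [digitVal_cons, h a List.mem_cons_self, ih fun x hx => h x (List.mem_cons_of_mem a hx)]

lemma digitVal_stripTrailingZeros (d : List ℕ) :
    digitVal (stripTrailingZeros d) = digitVal d := by
  have hsplit : stripTrailingZeros d ++ (d.reverse.takeWhile (· = 0)).reverse = d := by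
    rw [stripTrailingZeros, ← List.reverse_append, List.takeWhile_append_dropWhile,
      List.reverse_reverse]
  have hzeros : digitVal (d.reverse.takeWhile (· = 0)).reverse = 0 :=
    digitVal_eq_zero_of_forall_eq_zero fun x hx => by
      simpa using List.mem_takeWhile_imp (List.mem_reverse.mp hx)
  conv_rhs => rw [← hsplit]
  rw [digitVal_append, hzeros, mul_zero, add_zero]

lemma digitVal_set_add {l : List ℕ} {i : ℕ} (hi : i < l.length) (x : ℕ) :
    digitVal (l.set i x) + l.getD i 0 * 2 ^ i = digitVal l + x * 2 ^ i := by
  induction l generalizing i with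
  | nil => simp at hi
  | cons a t ih =>
    cases i with
    | zero => simp only [List.set_cons_zero, digitVal_cons, List.getD_cons_zero]; ring
    | succ i =>
      have h := ih (Nat.succ_lt_succ_iff.mp hi)
      simp only [List.set_cons_succ, digitVal_cons, List.getD_cons_succ, pow_succ]
      linear_combination 2 * h

lemma digitVal_borrow {l : List ℕ} {j : ℕ} (hj : j + 1 < l.length) (h1 : 1 ≤ l.getD (j + 1) 0) :
    digitVal ((l.set j (l.getD j 0 + 2)).set (j + 1) (l.getD (j + 1) 0 - 1)) = digitVal l := by
  have hnext : (l.set j (l.getD j 0 + 2)).getD (j + 1) 0 = l.getD (j + 1) 0 := by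
    simp [List.getD, List.getElem?_set_ne (by omega : j ≠ j + 1)]
  have hlow := digitVal_set_add (by omega : j < l.length) (l.getD j 0 + 2)
  have hhigh := digitVal_set_add (l := l.set j (l.getD j 0 + 2)) (by simpa using hj) (l.getD (j + 1) 0 - 1)
  rw [hnext] at hhigh
  obtain ⟨c, hc⟩ : ∃ c, l.getD (j + 1) 0 = c + 1 := ⟨_, (Nat.sub_add_cancel h1).symm⟩
  rw [hc, Nat.add_sub_cancel, pow_succ] at hhigh
  rw [hc, Nat.add_sub_cancel]
  linear_combination hhigh + hlow

lemma ExtReg.one_le_getD_succ {d : List ℕ} (hreg : ExtReg d) {j : ℕ} (hj : j + 1 < d.length)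
    (h0 : d.getD j 0 = 0) : 1 ≤ d.getD (j + 1) 0 := by
  by_contra! h
  obtain ⟨k, hk, hk23, hones⟩ := hreg.2 (j + 1) hj (by omega)
  rcases (Nat.lt_succ_iff.mp hk).lt_or_eq with hkj | rfl
  · have := hones j hkj j.lt_succ_self
    omega
  · omega

theorem stmt_9_general (d : List ℕ) (j : ℕ) (hj : j + 1 < d.length)
    (hreg : ExtReg d) (h0 : d.getD j 0 = 0) :
    1 ≤ d.getD (j + 1) 0 ∧ digitVal (fixBorrow d j) = digitVal d := by
  have h1 := hreg.one_le_getD_succ hj h0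
  refine ⟨h1, ?_⟩
  have hborrow := digitVal_borrow hj h1
  rw [h0, zero_add] at hborrow
  rw [fixBorrow, digitVal_stripTrailingZeros, hborrow]

/-- For an extended regular digit string with `d_j = 0` and `j + 1 ≤ ℓ - 1`,
we have `d_{j+1} ≥ 1`, and a fix-borrow does not change the value of the
represented number. -/
theorem stmt_9 (d : List ℕ) (j : ℕ) (hj : j + 1 < d.length)
    (hdig : ∀ x ∈ d, x ≤ 3) (hreg : ExtReg d) (h0 : d.getD j 0 = 0) :
    1 ≤ d.getD (j + 1) 0 ∧ digitVal (fixBorrow d j) = digitVal d :=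
  stmt_9_general d j hj hreg h0
end

section
/- Let d = ⟨d_0, …, d_{ℓ−1}⟩ be an extended regular digit string and let j satisfy j + 1 ≤ ℓ − 1 and d_j = 0. Then fix-borrow(d, j) is again a digit string (all digits at most 3) and is extended regular; moreover, its last digit is nonzero. -/
/-!
The borrow turns the digit pair `(d_j, d_{j+1}) = (0, x)` into `(2, x - 1)` and touches nothing
else. Whether a digit at `p` is guarded, i.e. preceded past a run of `c`'s by an `a` or a `b`, is
decided by scanning down from `p` one digit at a time, so it depends only on the digits below `p`
and it suffices to compare the guards at `j + 2`. A guard of a `3` that reaches `j` runs through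
`x = 2`, which becomes the witness `1`; a guard of a `0` cannot reach `j` because `d_j = 0`, and
its witness `x ∈ {2, 3}` either survives as `2` or is replaced by the new `2` at `j`. Stripping
trailing zeros changes no digit, and the `2` at `j` makes the last remaining digit nonzero.
-/

def Guarded (f : ℕ → ℕ) (a b c p : ℕ) : Prop :=
  ∃ k < p, (f k = a ∨ f k = b) ∧ ∀ m, k < m → m < p → f m = c

def RegularAt (f : ℕ → ℕ) (p : ℕ) : Prop :=
  (f p = 3 → Guarded f 0 1 2 p) ∧ (f p = 0 → Guarded f 2 3 1 p)

theorem extReg_iff_forall_regularAt {d : List ℕ} :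
    ExtReg d ↔ ∀ p < d.length, RegularAt (d.getD · 0) p := by
  simp only [ExtReg, RegularAt, Guarded, imp_and, forall_and]

section Guarded

variable {f g : ℕ → ℕ} {a b c : ℕ}

theorem not_guarded_zero : ¬ Guarded f a b c 0 := by
  simp [Guarded]

theorem guarded_succ {p : ℕ} :
    Guarded f a b c (p + 1) ↔ (f p = a ∨ f p = b) ∨ (f p = c ∧ Guarded f a b c p) := by
  constructor
  · rintro ⟨k, hk, hab, hbetween⟩
    rcases (Nat.lt_succ_iff_lt_or_eq.mp hk) with hk | rfl
    · exact .inr ⟨hbetween p hk p.lt_succ_self,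
        k, hk, hab, fun m hkm hmp => hbetween m hkm (hmp.trans p.lt_succ_self)⟩
    · exact .inl hab
  · rintro (hab | ⟨hc, k, hk, hab, hbetween⟩)
    · exact ⟨p, p.lt_succ_self, hab, fun m hpm hmp => absurd hmp (by omega)⟩
    · refine ⟨k, hk.trans p.lt_succ_self, hab, fun m hkm hmp => ?_⟩
      rcases Nat.lt_succ_iff_lt_or_eq.mp hmp with hmp | rfl
      exacts [hbetween m hkm hmp, hc]

theorem Guarded.of_eqOn_Ico {p q : ℕ} (hqp : q ≤ p)
    (hq : Guarded f a b c q → Guarded g a b c q) (hfg : ∀ m, q ≤ m → m < p → f m = g m) :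
    Guarded f a b c p → Guarded g a b c p := by
  induction p, hqp using Nat.le_induction with
  | base => exact hq
  | succ p hqp ih =>
    rw [guarded_succ, guarded_succ, hfg p hqp p.lt_succ_self]
    exact Or.imp_right (And.imp_right (ih fun m hqm hmp => hfg m hqm (hmp.trans p.lt_succ_self)))

end Guarded

def borrowAt (f : ℕ → ℕ) (j : ℕ) : ℕ → ℕ :=
  Function.update (Function.update f j 2) (j + 1) (f (j + 1) - 1)

section borrowAt

variable {f : ℕ → ℕ} {j : ℕ}

theorem borrowAt_self : borrowAt f j j = 2 := by
  simp [borrowAt]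

theorem borrowAt_succ : borrowAt f j (j + 1) = f (j + 1) - 1 := by
  simp [borrowAt]

theorem borrowAt_of_ne {m : ℕ} (hj : m ≠ j) (hj' : m ≠ j + 1) : borrowAt f j m = f m := by
  simp [borrowAt, hj, hj']

theorem borrowAt_le {n : ℕ} (hf : ∀ i, f i ≤ n) (h2 : 2 ≤ n) (i : ℕ) : borrowAt f j i ≤ n := by
  rcases eq_or_ne i j with rfl | hij
  · rwa [borrowAt_self]
  rcases eq_or_ne i (j + 1) with rfl | hij'
  · exact borrowAt_succ (f := f) ▸ (Nat.sub_le _ _).trans (hf _)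
  · exact borrowAt_of_ne hij hij' ▸ hf i

theorem guarded_borrowAt_succ : Guarded (borrowAt f j) 2 3 1 (j + 1) :=
  guarded_succ.mpr (.inl (.inl borrowAt_self))

theorem Guarded.borrowAt_zero_one_two (h : Guarded f 0 1 2 (j + 2)) :
    Guarded (borrowAt f j) 0 1 2 (j + 2) := by
  rw [guarded_succ (f := f)] at h
  rw [guarded_succ, borrowAt_succ]
  rcases h with (h | h) | ⟨h, -⟩ <;> left <;> omega

theorem Guarded.borrowAt_two_three_one (hj : f j = 0) (h : Guarded f 2 3 1 (j + 2)) :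
    Guarded (borrowAt f j) 2 3 1 (j + 2) := by
  rw [guarded_succ, guarded_succ, hj] at h
  rw [guarded_succ, borrowAt_succ]
  rcases h with (h | h) | ⟨h, hfalse⟩
  · exact .inr ⟨by omega, guarded_borrowAt_succ⟩
  · exact .inl (.inl (by omega))
  · simp at hfalse

theorem regularAt_borrowAt {p : ℕ} (hj : f j = 0) (hnext : f (j + 1) ≤ 3)
    (hp : RegularAt f p) : RegularAt (borrowAt f j) p := by
  rcases lt_trichotomy p j with hpj | rfl | hjp
  · have hfg : ∀ m, 0 ≤ m → m < p → f m = borrowAt f j m :=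
      fun m _ hm => (borrowAt_of_ne (by omega) (by omega)).symm
    rw [RegularAt, borrowAt_of_ne (by omega) (by omega)]
    exact ⟨fun h => (hp.1 h).of_eqOn_Ico p.zero_le not_guarded_zero.elim hfg,
      fun h => (hp.2 h).of_eqOn_Ico p.zero_le not_guarded_zero.elim hfg⟩
  · simp [RegularAt, borrowAt_self]
  rcases (Nat.succ_le_of_lt hjp).eq_or_lt with rfl | hjp'
  · rw [RegularAt, borrowAt_succ]
    exact ⟨fun h => by omega, fun _ => guarded_borrowAt_succ⟩
  have hfg : ∀ m, j + 2 ≤ m → m < p → f m = borrowAt f j m :=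
    fun m hm _ => (borrowAt_of_ne (by omega) (by omega)).symm
  rw [RegularAt, borrowAt_of_ne (by omega) (by omega)]
  exact ⟨fun h => (hp.1 h).of_eqOn_Ico hjp' Guarded.borrowAt_zero_one_two hfg,
    fun h => (hp.2 h).of_eqOn_Ico hjp' (Guarded.borrowAt_two_three_one hj) hfg⟩

end borrowAt

theorem List.getD_set_eq_update {α : Type*} {l : List α} {i : ℕ} (hi : i < l.length) (a x : α) :
    (fun k => (l.set i a).getD k x) = Function.update (fun k => l.getD k x) i a := by
  funext k
  rcases eq_or_ne k i with rfl | hk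
  · simp [hi]
  · simp [hk, Ne.symm hk]

theorem List.forall_mem_le_iff_forall_getD_le {l : List ℕ} {n : ℕ} :
    (∀ x ∈ l, x ≤ n) ↔ ∀ i, l.getD i 0 ≤ n := by
  constructor
  · intro h i
    rcases lt_or_ge i l.length with hi | hi
    · exact List.getD_eq_getElem l 0 hi ▸ h _ (List.getElem_mem hi)
    · exact (List.getD_eq_default l 0 hi).trans_le n.zero_le
  · intro h x hx
    obtain ⟨i, hi, rfl⟩ := List.mem_iff_getElem.mp hx
    exact List.getD_eq_getElem l 0 hi ▸ h i

section stripTrailingZeros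

theorem stripTrailingZeros_eq_rdropWhile (l : List ℕ) :
    stripTrailingZeros l = l.rdropWhile (· = 0) := rfl

theorem length_stripTrailingZeros_le (l : List ℕ) : (stripTrailingZeros l).length ≤ l.length :=
  (List.rdropWhile_prefix _ l).length_le

theorem getD_stripTrailingZeros (l : List ℕ) (i : ℕ) :
    (stripTrailingZeros l).getD i 0 = l.getD i 0 := by
  rw [stripTrailingZeros_eq_rdropWhile]
  conv_rhs => rw [← List.rdropWhile_append_rtakeWhile (p := (· = 0)) (l := l)]
  rcases lt_or_ge i (l.rdropWhile (· = 0)).length with hi | hi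
  · exact (List.getD_append _ _ _ _ hi).symm
  · have hzero : ∀ x ∈ l.rtakeWhile (· = 0), x ≤ 0 :=
      fun x hx => (of_decide_eq_true (List.mem_rtakeWhile_imp (p := (· = 0)) hx)).le
    rw [List.getD_eq_default _ _ hi, List.getD_append_right _ _ _ _ hi]
    exact (Nat.le_zero.mp (List.forall_mem_le_iff_forall_getD_le.mp hzero _)).symm

theorem getLastD_stripTrailingZeros_ne_zero {l : List ℕ} {i : ℕ} (h : l.getD i 0 ≠ 0) :
    (stripTrailingZeros l).getLastD 0 ≠ 0 := by
  have hne : stripTrailingZeros l ≠ [] := by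
    intro hnil
    rw [← getD_stripTrailingZeros, hnil, List.getD_nil] at h
    exact h rfl
  rw [List.getLastD_eq_getLast?, List.getLast?_eq_some_getLast hne]
  exact fun hlast => List.rdropWhile_last_not _ l hne (decide_eq_true hlast)

end stripTrailingZeros

section fixBorrow

variable {d : List ℕ} {j : ℕ}

theorem getD_set_set_eq_borrowAt (hj : j + 1 < d.length) (i : ℕ) :
    ((d.set j 2).set (j + 1) (d.getD (j + 1) 0 - 1)).getD i 0 = borrowAt (d.getD · 0) j i := by
  suffices h : (fun k => ((d.set j 2).set (j + 1) (d.getD (j + 1) 0 - 1)).getD k 0) =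
      borrowAt (d.getD · 0) j from congrFun h i
  rw [List.getD_set_eq_update (by simpa using hj), List.getD_set_eq_update (by omega)]
  rfl

theorem getD_fixBorrow (hj : j + 1 < d.length) (i : ℕ) :
    (fixBorrow d j).getD i 0 = borrowAt (d.getD · 0) j i :=
  (getD_stripTrailingZeros _ i).trans (getD_set_set_eq_borrowAt hj i)

theorem length_fixBorrow_le : (fixBorrow d j).length ≤ d.length :=
  (length_stripTrailingZeros_le _).trans (by simp)

end fixBorrow

/-- A fix-borrow keeps the representation an extended regular digit string
whose last digit is nonzero. -/
theorem stmt_10 (d : List ℕ) (j : ℕ) (hj : j + 1 < d.length)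
    (hdig : ∀ x ∈ d, x ≤ 3) (hreg : ExtReg d) (h0 : d.getD j 0 = 0) :
    (∀ x ∈ fixBorrow d j, x ≤ 3) ∧ ExtReg (fixBorrow d j) ∧
      (fixBorrow d j).getLastD 0 ≠ 0 := by
  have hdigits := List.forall_mem_le_iff_forall_getD_le.mp hdig
  refine ⟨List.forall_mem_le_iff_forall_getD_le.mpr fun i => ?_, ?_, ?_⟩
  · exact getD_fixBorrow hj i ▸ borrowAt_le hdigits (by norm_num) i
  · rw [extReg_iff_forall_regularAt] at hreg ⊢
    intro p hp
    simp only [getD_fixBorrow hj]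
    exact regularAt_borrowAt h0 (hdigits _) (hreg p (hp.trans_le length_fixBorrow_le))
  · apply getLastD_stripTrailingZeros_ne_zero (i := j)
    rw [getD_set_set_eq_borrowAt hj, borrowAt_self]
    exact two_ne_zero
end

section
/- Let d = ⟨d_0, …, d_{ℓ−1}⟩ be an extended regular representation of a natural number n, and let i be an index with 0 ≤ i ≤ ℓ. Then there exists an extended regular representation d' of n + 2^i such that the length of d' is at most ℓ + 1 and, after padding the shorter of d and d' with trailing zeros, the two strings differ in at most 4 positions. -/
/-- An extended regular representation of a natural number `n`: an extended
regular digit string with digits at most `3`, whose last digit is nonzero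
(the number `0` is represented by the empty string), and whose value is `n`. -/
def IsExtRegRep (d : List ℕ) (n : ℕ) : Prop :=
  (∀ x ∈ d, x ≤ 3) ∧ ExtReg d ∧ (d ≠ [] → d.getLastD 0 ≠ 0) ∧ digitVal d = n

/-- The number of positions at which two digit strings differ, after padding
the shorter one with trailing zeros. -/
def diffCount (d d' : List ℕ) : ℕ :=
  ((Finset.range (max d.length d'.length)).filter
    (fun k => d.getD k 0 ≠ d'.getD k 0)).card

/-! ### Auxiliary machinery -/

def step (s : Bool × Bool) (x : ℕ) : Bool × Bool :=
  (if x = 2 then s.1 else decide (x ≤ 1), if x = 1 then s.2 else decide (2 ≤ x))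

def Ok : Bool × Bool → List ℕ → Prop
  | _, [] => True
  | s, x :: t => (x = 3 → s.1 = true) ∧ (x = 0 → s.2 = true) ∧ Ok (step s x) t

@[simp] lemma ok_nil (s : Bool × Bool) : Ok s [] := trivial

lemma ok_cons {s : Bool × Bool} {x : ℕ} {t : List ℕ} :
    Ok s (x :: t) ↔ (x = 3 → s.1 = true) ∧ (x = 0 → s.2 = true) ∧ Ok (step s x) t := Iff.rfl

lemma step_mono {s s' : Bool × Bool} (x : ℕ)
    (h1 : s.1 = true → s'.1 = true) (h2 : s.2 = true → s'.2 = true) :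
    ((step s x).1 = true → (step s' x).1 = true) ∧
      ((step s x).2 = true → (step s' x).2 = true) := by
  unfold step; constructor <;> dsimp <;> split <;> simp_all

lemma ok_mono : ∀ (t : List ℕ) (s s' : Bool × Bool),
    (s.1 = true → s'.1 = true) → (s.2 = true → s'.2 = true) → Ok s t → Ok s' t
  | [], _, _, _, _, _ => trivial
  | x :: t, s, s', h1, h2, ⟨ha, hb, ht⟩ =>
    ⟨fun hx => h1 (ha hx), fun hx => h2 (hb hx),
      ok_mono t _ _ (step_mono x h1 h2).1 (step_mono x h1 h2).2 ht⟩

lemma ok_append {p r : List ℕ} {s : Bool × Bool} :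
    Ok s (p ++ r) ↔ Ok s p ∧ Ok (List.foldl step s p) r := by
  induction p generalizing s with
  | nil => simp
  | cons x t ih => simp [ok_cons, ih, and_assoc]

lemma digitVal_ofDigits (d : List ℕ) : digitVal d = Nat.ofDigits 2 d := by
  induction d with
  | nil => simp [digitVal, Nat.ofDigits]
  | cons x t ih =>
    rw [digitVal, List.length_cons, Finset.sum_range_succ']
    simp_rw [List.getD_cons_succ, List.getD_cons_zero, pow_zero, mul_one, pow_succ, ← mul_assoc]
    rw [← Finset.sum_mul, Nat.ofDigits_cons, ← ih, digitVal]
    ring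

lemma getD_append_left {l : List ℕ} {x : ℕ} {k : ℕ} (h : k < l.length) :
    (l ++ [x]).getD k 0 = l.getD k 0 := by
  simp [List.getD_eq_getElem?_getD, List.getElem?_append_left h]

lemma getD_append_len (l : List ℕ) (x : ℕ) : (l ++ [x]).getD l.length 0 = x := by
  simp [List.getD_eq_getElem?_getD, List.getElem?_append_right (le_refl l.length)]

lemma getD_take {l : List ℕ} {j k : ℕ} (h : k < j) : (l.take j).getD k 0 = l.getD k 0 := by
  simp [List.getD_eq_getElem?_getD, List.getElem?_take, h]

lemma run_fst (p : List ℕ) : (List.foldl step (false, false) p).1 = true ↔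
    ∃ k < p.length, p.getD k 0 ≤ 1 ∧ ∀ m, k < m → m < p.length → p.getD m 0 = 2 := by
  induction p using List.reverseRecOn with
  | nil => simp
  | append_singleton p x ih =>
    rw [List.foldl_append, List.foldl_cons, List.foldl_nil]
    by_cases hx : x = 2
    · subst hx
      have : (step (List.foldl step (false, false) p) 2).1 = (List.foldl step (false, false) p).1 := by
        simp [step]
      rw [this, ih]
      constructor
      · rintro ⟨k, hk, h1, h2⟩
        refine ⟨k, by simp; omega, by rwa [getD_append_left hk], fun m hm hm' => ?_⟩
        simp only [List.length_append, List.length_singleton] at hm'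
        rcases Nat.lt_or_ge m p.length with h | h
        · rw [getD_append_left h]; exact h2 m hm h
        · have : m = p.length := by omega
          subst this; exact getD_append_len p 2
      · rintro ⟨k, hk, h1, h2⟩
        simp only [List.length_append, List.length_singleton] at hk
        rcases Nat.lt_or_ge k p.length with h | h
        · exact ⟨k, h, by rwa [getD_append_left h] at h1,
            fun m hm hm' => by rw [← getD_append_left (l := p) (x := (2:ℕ)) hm']; exact h2 m hm (by simp; omega)⟩
        · have : k = p.length := by omega
          subst this; rw [getD_append_len] at h1; omega
    · have : (step (List.foldl step (false, false) p) x).1 = decide (x ≤ 1) := by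
        simp [step, hx]
      rw [this]
      simp only [decide_eq_true_eq]
      constructor
      · intro h
        exact ⟨p.length, by simp, by rwa [getD_append_len], fun m hm hm' => by
          simp only [List.length_append, List.length_singleton] at hm'; omega⟩
      · rintro ⟨k, hk, h1, h2⟩
        simp only [List.length_append, List.length_singleton] at hk
        rcases Nat.lt_or_ge k p.length with h | h
        · have := h2 p.length h (by simp)
          rw [getD_append_len] at this; exact absurd this hx
        · have : k = p.length := by omega
          subst this; rwa [getD_append_len] at h1

lemma run_snd (p : List ℕ) : (List.foldl step (false, false) p).2 = true ↔
    ∃ k < p.length, 2 ≤ p.getD k 0 ∧ ∀ m, k < m → m < p.length → p.getD m 0 = 1 := by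
  induction p using List.reverseRecOn with
  | nil => simp
  | append_singleton p x ih =>
    rw [List.foldl_append, List.foldl_cons, List.foldl_nil]
    by_cases hx : x = 1
    · subst hx
      have : (step (List.foldl step (false, false) p) 1).2 = (List.foldl step (false, false) p).2 := by
        simp [step]
      rw [this, ih]
      constructor
      · rintro ⟨k, hk, h1, h2⟩
        refine ⟨k, by simp; omega, by rwa [getD_append_left hk], fun m hm hm' => ?_⟩
        simp only [List.length_append, List.length_singleton] at hm'
        rcases Nat.lt_or_ge m p.length with h | h
        · rw [getD_append_left h]; exact h2 m hm h
        · have : m = p.length := by omega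
          subst this; exact getD_append_len p 1
      · rintro ⟨k, hk, h1, h2⟩
        simp only [List.length_append, List.length_singleton] at hk
        rcases Nat.lt_or_ge k p.length with h | h
        · exact ⟨k, h, by rwa [getD_append_left h] at h1,
            fun m hm hm' => by rw [← getD_append_left (l := p) (x := (1:ℕ)) hm']; exact h2 m hm (by simp; omega)⟩
        · have : k = p.length := by omega
          subst this; rw [getD_append_len] at h1; omega
    · have : (step (List.foldl step (false, false) p) x).2 = decide (2 ≤ x) := by
        simp [step, hx]
      rw [this]
      simp only [decide_eq_true_eq]
      constructor
      · intro h
        exact ⟨p.length, by simp, by rwa [getD_append_len], fun m hm hm' => by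
          simp only [List.length_append, List.length_singleton] at hm'; omega⟩
      · rintro ⟨k, hk, h1, h2⟩
        simp only [List.length_append, List.length_singleton] at hk
        rcases Nat.lt_or_ge k p.length with h | h
        · have := h2 p.length h (by simp)
          rw [getD_append_len] at this; exact absurd this hx
        · have : k = p.length := by omega
          subst this; rwa [getD_append_len] at h1

lemma ok_iff_forall : ∀ (d : List ℕ) (s : Bool × Bool), Ok s d ↔
    ∀ j < d.length, (d.getD j 0 = 3 → (List.foldl step s (d.take j)).1 = true) ∧
      (d.getD j 0 = 0 → (List.foldl step s (d.take j)).2 = true) := by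
  intro d
  induction d with
  | nil => intro s; simp [Ok]
  | cons x t ih =>
    intro s
    constructor
    · rintro ⟨h3, h0, ht⟩ j hj
      match j with
      | 0 => simpa using ⟨h3, h0⟩
      | j + 1 =>
        have := (ih (step s x)).mp ht j (by simpa using hj)
        simpa using this
    · intro h
      refine ⟨by simpa using (h 0 (by simp)).1, by simpa using (h 0 (by simp)).2, ?_⟩
      refine (ih (step s x)).mpr fun j hj => ?_
      have := h (j + 1) (by simpa using hj)
      simpa using this

lemma getD_mem {d : List ℕ} {k : ℕ} (h : k < d.length) : d.getD k 0 ∈ d := by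
  rw [List.getD_eq_getElem _ _ h]; exact List.getElem_mem h

lemma extReg_iff {d : List ℕ} (hd3 : ∀ x ∈ d, x ≤ 3) : ExtReg d ↔ Ok (false, false) d := by
  rw [ok_iff_forall]
  constructor
  · rintro ⟨H3, H0⟩ j hj
    constructor
    · intro hx
      rw [run_fst]
      obtain ⟨k, hk, h1, h2⟩ := H3 j hj hx
      have hlen : (d.take j).length = j := by simp; omega
      refine ⟨k, by omega, ?_, fun m hm hm' => ?_⟩
      · rw [getD_take hk]; omega
      · rw [hlen] at hm'; rw [getD_take hm']; exact h2 m hm hm'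
    · intro hx
      rw [run_snd]
      obtain ⟨k, hk, h1, h2⟩ := H0 j hj hx
      have hlen : (d.take j).length = j := by simp; omega
      refine ⟨k, by omega, ?_, fun m hm hm' => ?_⟩
      · rw [getD_take hk]; omega
      · rw [hlen] at hm'; rw [getD_take hm']; exact h2 m hm hm'
  · intro H
    constructor
    · intro j hj hx
      have := (H j hj).1 hx
      rw [run_fst] at this
      obtain ⟨k, hk, h1, h2⟩ := this
      have hlen : (d.take j).length = j := by simp; omega
      rw [hlen] at hk h2
      rw [getD_take hk] at h1
      exact ⟨k, hk, by omega, fun m hm hm' => by rw [← getD_take hm']; exact h2 m hm hm'⟩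
    · intro j hj hx
      have := (H j hj).2 hx
      rw [run_snd] at this
      obtain ⟨k, hk, h1, h2⟩ := this
      have hlen : (d.take j).length = j := by simp; omega
      rw [hlen] at hk h2
      rw [getD_take hk] at h1
      have hk3 : d.getD k 0 ≤ 3 := hd3 _ (getD_mem (by omega))
      exact ⟨k, hk, by omega, fun m hm hm' => by rw [← getD_take hm']; exact h2 m hm hm'⟩

/-! ### diffCount and list surgery lemmas -/

lemma diffCount_self (s : List ℕ) : diffCount s s = 0 := by
  simp [diffCount]

lemma diffCount_cons (x y : ℕ) (s s' : List ℕ) :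
    diffCount (x :: s) (y :: s') = (if x = y then 0 else 1) + diffCount s s' := by
  unfold diffCount
  rw [Finset.card_filter, Finset.card_filter]
  simp only [List.length_cons, Nat.succ_max_succ, Finset.sum_range_succ']
  simp only [List.getD_cons_succ, List.getD_cons_zero]
  rw [add_comm]
  congr 1
  by_cases h : x = y <;> simp [h]

lemma diffCount_prefix (p u u' : List ℕ) :
    diffCount (p ++ u) (p ++ u') = diffCount u u' := by
  induction p with
  | nil => rfl
  | cons x t ih => simpa [diffCount_cons] using ih

lemma diffCount_nil_one : diffCount [] [1] = 1 := by
  simp [diffCount]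
  decide

def bump : List ℕ → List ℕ
  | [] => [1]
  | z :: t => (z + 1) :: t

lemma diffCount_bump (t : List ℕ) : diffCount t (bump t) ≤ 1 := by
  cases t with
  | nil => simp [bump, diffCount_nil_one]
  | cons z u => simp [bump, diffCount_cons, diffCount_self]

lemma length_bump (t : List ℕ) : (bump t).length ≤ t.length + 1 := by
  cases t <;> simp [bump]

lemma bump_ne_nil (t : List ℕ) : bump t ≠ [] := by
  cases t <;> simp [bump]

lemma ofDigits_bump (t : List ℕ) : Nat.ofDigits 2 (bump t) = Nat.ofDigits 2 t + 1 := by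
  cases t with
  | nil => simp [bump, Nat.ofDigits]
  | cons z u => simp [bump, Nat.ofDigits_cons]; ring

lemma getLastD_irrel (l : List ℕ) (h : l ≠ []) (c c' : ℕ) : l.getLastD c = l.getLastD c' := by
  cases l with
  | nil => exact absurd rfl h
  | cons x t => rw [List.getLastD_cons, List.getLastD_cons]

lemma getLastD_append (p l : List ℕ) (c : ℕ) (h : l ≠ []) :
    (p ++ l).getLastD c = l.getLastD c := by
  induction p generalizing c with
  | nil => rfl
  | cons x t ih => rw [List.cons_append, List.getLastD_cons, ih x, getLastD_irrel l h]

lemma getLastD_bump (t : List ℕ) (h : t.getLastD 1 ≠ 0) : (bump t).getLastD 1 ≠ 0 := by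
  cases t with
  | nil => simp [bump]
  | cons z u =>
    cases u with
    | nil => simp [bump, List.getLastD_cons]
    | cons w v => simpa [bump, List.getLastD_cons] using h

lemma exists_replicate_split (l : List ℕ) : ∃ k rest, l = List.replicate k 2 ++ rest ∧
    (rest = [] ∨ ∃ y t, rest = y :: t ∧ y ≠ 2) := by
  induction l with
  | nil => exact ⟨0, [], rfl, Or.inl rfl⟩
  | cons x t ih =>
    by_cases hx : x = 2
    · obtain ⟨k, rest, he, hr⟩ := ih
      exact ⟨k + 1, rest, by rw [List.replicate_succ, List.cons_append, ← he, hx], hr⟩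
    · exact ⟨0, x :: t, rfl, Or.inr ⟨x, t, rfl, hx⟩⟩

lemma ofDigits_replicate2_append (k : ℕ) (u : List ℕ) :
    Nat.ofDigits 2 (List.replicate k 2 ++ u) =
      Nat.ofDigits 2 (List.replicate k 2) + 2 ^ k * Nat.ofDigits 2 u := by
  rw [Nat.ofDigits_append, List.length_replicate]

lemma foldl_replicate2 (s : Bool × Bool) (k : ℕ) :
    List.foldl step s (List.replicate k 2) = (s.1, s.2 || decide (0 < k)) := by
  induction k generalizing s with
  | zero => simp
  | succ k ih =>
    rw [List.replicate_succ, List.foldl_cons, ih]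
    simp [step]

lemma ok_replicate (s : Bool × Bool) (k : ℕ) : Ok s (List.replicate k 2) := by
  induction k generalizing s with
  | zero => trivial
  | succ k ih =>
    rw [List.replicate_succ]
    exact ⟨by simp, by simp, ih _⟩

lemma ok_replicate_append {s : Bool × Bool} {k : ℕ} {rest : List ℕ} :
    Ok s (List.replicate k 2 ++ rest) ↔ Ok (s.1, s.2 || decide (0 < k)) rest := by
  rw [ok_append, foldl_replicate2]
  simp [ok_replicate]

lemma rest_transfer {rest : List ℕ} {c b₀ : Bool} (a : Bool) (hok : Ok (c, b₀) rest)
    (hr : rest = [] ∨ ∃ y t, rest = y :: t ∧ y ≠ 2 ∧ y ≠ 3) : Ok (a, true) rest := by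
  rcases hr with rfl | ⟨y, t, rfl, hy2, hy3⟩
  · trivial
  obtain ⟨h3, h0, ht⟩ := hok
  refine ⟨fun h => absurd h hy3, fun _ => rfl, ok_mono _ _ _ ?_ ?_ ht⟩
  · simp [step, hy2]
  · by_cases hy : y = 1 <;> simp [step, hy]

lemma bump_ok {t : List ℕ} (h3 : ∀ x ∈ t, x ≤ 3) (hok : Ok (false, true) t) :
    Ok (true, true) (bump t) ∧ (∀ x ∈ bump t, x ≤ 3) := by
  cases t with
  | nil => exact ⟨⟨by simp, by simp, trivial⟩, by simp [bump]⟩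
  | cons z u =>
    obtain ⟨hz3, hz0, hu⟩ := hok
    have hz2 : z ≤ 2 := by
      have hz : z ≤ 3 := h3 z (by simp)
      rcases Nat.lt_or_ge z 3 with h | h
      · omega
      · have : z = 3 := by omega
        exact absurd (hz3 this) (by simp)
    constructor
    · refine ⟨fun _ => rfl, by omega, ?_⟩
      apply ok_mono _ _ _ ?_ ?_ hu
      · interval_cases z <;> simp [step]
      · interval_cases z <;> simp [step]
    · intro x hx
      simp only [bump, List.mem_cons] at hx
      rcases hx with rfl | hx
      · omega
      · exact h3 x (by simp [hx])

lemma key (r : List ℕ) (a b : Bool) (h3 : ∀ x ∈ r, x ≤ 3) (hok : Ok (a, b) r)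
    (hlast : r.getLastD 1 ≠ 0) :
    ∃ r₂ : List ℕ, (∀ x ∈ r₂, x ≤ 3) ∧ Ok (a, b) r₂ ∧ r₂ ≠ [] ∧ r₂.getLastD 1 ≠ 0 ∧
      Nat.ofDigits 2 r₂ = Nat.ofDigits 2 r + 1 ∧ r₂.length ≤ r.length + 1 ∧
      diffCount r r₂ ≤ 4 := by
  cases r with
  | nil =>
    refine ⟨[1], by simp, ⟨by simp, by simp, trivial⟩, by simp, by simp, ?_, by simp, ?_⟩
    · simp [Nat.ofDigits]
    · simp [diffCount_nil_one]
  | cons x r' =>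
    have hx3 : x ≤ 3 := h3 x (by simp)
    have h3' : ∀ y ∈ r', y ≤ 3 := fun y hy => h3 y (by simp [hy])
    interval_cases x
    · -- x = 0 : replace head by 1
      obtain ⟨-, hb0, ht⟩ := hok
      have hb : b = true := hb0 rfl
      have hr' : r' ≠ [] := by
        intro h
        subst h
        simp [List.getLastD_cons] at hlast
      refine ⟨1 :: r', ?_, ⟨by simp, by simp, ?_⟩, by simp, ?_, ?_, by simp, ?_⟩
      · intro y hy; rcases List.mem_cons.mp hy with rfl | hy; omega; exact h3' y hy
      · exact ok_mono _ _ _ (by simp [step]) (by simp [step]) ht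
      · rw [List.getLastD_cons, getLastD_irrel r' hr' 1 0]
        rwa [List.getLastD_cons] at hlast
      · simp [Nat.ofDigits_cons]; ring
      · simp [diffCount_cons, diffCount_self]
    · -- x = 1
      obtain ⟨-, -, ht⟩ := hok
      have ht' : Ok (true, b) r' := by
        apply ok_mono _ _ _ ?_ ?_ ht <;> simp [step]
      obtain ⟨k, rest, rfl, hr⟩ := exists_replicate_split r'
      have hrest : Ok (true, b || decide (0 < k)) rest := by
        exact (ok_replicate_append (s := (true, b))).mp ht'
      by_cases h33 : ∃ t, rest = 3 :: t
      · -- carry case : 1 (2^k) 3 t  →  2 (2^k) 1 (bump t)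
        obtain ⟨t, rfl⟩ := h33
        obtain ⟨-, -, ht3⟩ := hrest
        have hOkt : Ok (false, true) t := by
          apply ok_mono _ _ _ ?_ ?_ ht3 <;> simp [step]
        have h3t : ∀ y ∈ t, y ≤ 3 := fun y hy => h3' y (by simp [hy])
        obtain ⟨hbOk, hb3⟩ := bump_ok h3t hOkt
        refine ⟨2 :: (List.replicate k 2 ++ 1 :: bump t), ?_, ?_, by simp, ?_, ?_, ?_, ?_⟩
        · intro y hy
          simp only [List.mem_cons, List.mem_append, List.mem_replicate] at hy
          rcases hy with rfl | ⟨-, rfl⟩ | rfl | hy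
          · omega
          · omega
          · omega
          · exact hb3 y hy
        · refine ⟨by simp, by simp, ?_⟩
          have : step (a, b) 2 = (a, true) := by simp [step]
          rw [this]
          rw [ok_replicate_append]
          refine ⟨by simp, by simp, ?_⟩
          exact ok_mono _ _ _ (by simp [step]) (by simp [step]) hbOk
        · rw [List.getLastD_cons, getLastD_append _ _ _ (by simp), List.getLastD_cons,
            getLastD_irrel _ (bump_ne_nil t) 1 1]
          apply getLastD_bump
          cases t with
          | nil => simp
          | cons w v =>
            rw [List.getLastD_cons, getLastD_append _ _ _ (by simp), List.getLastD_cons,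
              List.getLastD_cons] at hlast
            rw [List.getLastD_cons]
            exact hlast
        · rw [Nat.ofDigits_cons, Nat.ofDigits_cons, ofDigits_replicate2_append,
            ofDigits_replicate2_append, Nat.ofDigits_cons, Nat.ofDigits_cons, ofDigits_bump]
          ring
        · simp [length_bump]
          have := length_bump t
          omega
        · rw [diffCount_cons, diffCount_prefix, diffCount_cons]
          have := diffCount_bump t
          simp only [if_neg (by omega : ¬(1:ℕ) = 2), if_neg (by omega : ¬(3:ℕ) = 1)]
          omega
      · -- no carry : just set head to 2
        have hA : rest = [] ∨ ∃ y t, rest = y :: t ∧ y ≠ 2 ∧ y ≠ 3 := by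
          rcases hr with rfl | ⟨y, t, rfl, hy2⟩
          · exact Or.inl rfl
          · exact Or.inr ⟨y, t, rfl, hy2, fun h => h33 ⟨t, by rw [h]⟩⟩
        refine ⟨2 :: (List.replicate k 2 ++ rest), ?_, ?_, by simp, ?_, ?_, by simp, ?_⟩
        · intro y hy
          rcases List.mem_cons.mp hy with rfl | hy
          · omega
          · exact h3' y hy
        · refine ⟨by simp, by simp, ?_⟩
          have : step (a, b) 2 = (a, true) := by simp [step]
          rw [this, ok_replicate_append]
          exact rest_transfer a hrest hA
        · rw [List.getLastD_cons]
          by_cases hw : List.replicate k 2 ++ rest = []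
          · rw [hw]; simp
          · rw [getLastD_irrel _ hw 2 1]
            rw [List.getLastD_cons] at hlast
            rwa [getLastD_irrel _ hw 1 1] at hlast
        · rw [Nat.ofDigits_cons, Nat.ofDigits_cons]; ring
        · simp [diffCount_cons, diffCount_self]
    · -- x = 2
      obtain ⟨-, -, ht⟩ := hok
      have ht' : Ok (a, true) r' := by
        apply ok_mono _ _ _ ?_ ?_ ht <;> simp [step]
      by_cases ha : a = true
      · subst ha
        obtain ⟨k, rest, rfl, hr⟩ := exists_replicate_split r'
        have hrest : Ok (true, true || decide (0 < k)) rest :=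
          (ok_replicate_append (s := (true, true))).mp ht'
        have hrest' : Ok (true, true) rest := by
          apply ok_mono _ _ _ ?_ ?_ hrest <;> simp
        by_cases h33 : ∃ t, rest = 3 :: t
        · -- carry case : 2 (2^k) 3 t  →  3 (2^k) 1 (bump t)
          obtain ⟨t, rfl⟩ := h33
          obtain ⟨-, -, ht3⟩ := hrest'
          have hOkt : Ok (false, true) t := by
            apply ok_mono _ _ _ ?_ ?_ ht3 <;> simp [step]
          have h3t : ∀ y ∈ t, y ≤ 3 := fun y hy => h3' y (by simp [hy])
          obtain ⟨hbOk, hb3⟩ := bump_ok h3t hOkt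
          refine ⟨3 :: (List.replicate k 2 ++ 1 :: bump t), ?_, ?_, by simp, ?_, ?_, ?_, ?_⟩
          · intro y hy
            simp only [List.mem_cons, List.mem_append, List.mem_replicate] at hy
            rcases hy with rfl | ⟨-, rfl⟩ | rfl | hy
            · omega
            · omega
            · omega
            · exact hb3 y hy
          · refine ⟨fun _ => rfl, by simp, ?_⟩
            have : step (true, b) 3 = (false, true) := by simp [step]
            rw [this, ok_replicate_append]
            refine ⟨by simp, by simp, ?_⟩
            exact ok_mono _ _ _ (by simp [step]) (by simp [step]) hbOk
          · rw [List.getLastD_cons, getLastD_append _ _ _ (by simp), List.getLastD_cons,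
              getLastD_irrel _ (bump_ne_nil t) 1 1]
            apply getLastD_bump
            cases t with
            | nil => simp
            | cons w v =>
              rw [List.getLastD_cons, getLastD_append _ _ _ (by simp), List.getLastD_cons,
                List.getLastD_cons] at hlast
              rw [List.getLastD_cons]
              exact hlast
          · rw [Nat.ofDigits_cons, Nat.ofDigits_cons, ofDigits_replicate2_append,
              ofDigits_replicate2_append, Nat.ofDigits_cons, Nat.ofDigits_cons, ofDigits_bump]
            ring
          · simp [length_bump]
            have := length_bump t
            omega
          · rw [diffCount_cons, diffCount_prefix, diffCount_cons]
            have := diffCount_bump t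
            simp only [if_neg (by omega : ¬(2:ℕ) = 3), if_neg (by omega : ¬(3:ℕ) = 1)]
            omega
        · -- no carry : set head to 3
          have hA : rest = [] ∨ ∃ y t, rest = y :: t ∧ y ≠ 2 ∧ y ≠ 3 := by
            rcases hr with rfl | ⟨y, t, rfl, hy2⟩
            · exact Or.inl rfl
            · exact Or.inr ⟨y, t, rfl, hy2, fun h => h33 ⟨t, by rw [h]⟩⟩
          refine ⟨3 :: (List.replicate k 2 ++ rest), ?_, ?_, by simp, ?_, ?_, by simp, ?_⟩
          · intro y hy
            rcases List.mem_cons.mp hy with rfl | hy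
            · omega
            · exact h3' y hy
          · refine ⟨fun _ => rfl, by simp, ?_⟩
            have : step (true, b) 3 = (false, true) := by simp [step]
            rw [this, ok_replicate_append]
            exact rest_transfer false hrest' hA
          · rw [List.getLastD_cons]
            by_cases hw : List.replicate k 2 ++ rest = []
            · rw [hw]; simp
            · rw [getLastD_irrel _ hw 3 1]
              rw [List.getLastD_cons] at hlast
              rwa [getLastD_irrel _ hw 2 1] at hlast
          · rw [Nat.ofDigits_cons, Nat.ofDigits_cons]; ring
          · simp [diffCount_cons, diffCount_self]
      · -- a = false
        have haf : a = false := by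
          cases a
          · rfl
          · exact absurd rfl ha
        subst haf
        cases r' with
        | nil =>
          refine ⟨[1, 1], by simp, ⟨by simp, by simp, by simp, by simp, trivial⟩, by simp,
            by simp, ?_, by simp, ?_⟩
          · simp [Nat.ofDigits]
          · rw [diffCount_cons]
            simp [diffCount_nil_one]
        | cons c u =>
          have hc3 : c ≤ 3 := h3' c (by simp)
          obtain ⟨hcA, hcB, hu⟩ := ht'
          have h3u : ∀ y ∈ u, y ≤ 3 := fun y hy => h3' y (by simp [hy])
          interval_cases c
          · -- 2 0 u → 1 1 u
            have hu' : Ok (true, false) u := by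
              apply ok_mono _ _ _ ?_ ?_ hu <;> simp [step]
            have hune : u ≠ [] := by
              intro h
              subst h
              simp [List.getLastD_cons] at hlast
            refine ⟨1 :: 1 :: u, ?_, ?_, by simp, ?_, ?_, by simp, ?_⟩
            · intro y hy
              rcases List.mem_cons.mp hy with rfl | hy
              · omega
              rcases List.mem_cons.mp hy with rfl | hy
              · omega
              · exact h3u y hy
            · refine ⟨by simp, by simp, by simp, by simp, ?_⟩
              exact ok_mono _ _ _ (by simp [step]) (by simp [step]) hu'
            · rw [List.getLastD_cons, List.getLastD_cons, getLastD_irrel u hune 1 0]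
              rwa [List.getLastD_cons, List.getLastD_cons] at hlast
            · simp [Nat.ofDigits_cons]; ring
            · simp [diffCount_cons, diffCount_self]
          · -- 2 1 u → 1 2 u
            have hu' : Ok (true, true) u := by
              apply ok_mono _ _ _ ?_ ?_ hu <;> simp [step]
            refine ⟨1 :: 2 :: u, ?_, ?_, by simp, ?_, ?_, by simp, ?_⟩
            · intro y hy
              rcases List.mem_cons.mp hy with rfl | hy
              · omega
              rcases List.mem_cons.mp hy with rfl | hy
              · omega
              · exact h3u y hy
            · refine ⟨by simp, by simp, by simp, by simp, ?_⟩
              exact ok_mono _ _ _ (by simp [step]) (by simp [step]) hu'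
            · cases u with
              | nil => simp
              | cons w v =>
                rw [List.getLastD_cons, List.getLastD_cons, List.getLastD_cons]
                rwa [List.getLastD_cons, List.getLastD_cons, List.getLastD_cons] at hlast
            · simp [Nat.ofDigits_cons]; ring
            · simp [diffCount_cons, diffCount_self]
          · -- 2 2 u → 1 3 u
            have hu' : Ok (false, true) u := by
              apply ok_mono _ _ _ ?_ ?_ hu <;> simp [step]
            refine ⟨1 :: 3 :: u, ?_, ?_, by simp, ?_, ?_, by simp, ?_⟩
            · intro y hy
              rcases List.mem_cons.mp hy with rfl | hy
              · omega
              rcases List.mem_cons.mp hy with rfl | hy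
              · omega
              · exact h3u y hy
            · refine ⟨by simp, by simp, by simp [step], by simp, ?_⟩
              exact ok_mono _ _ _ (by simp [step]) (by simp [step]) hu'
            · cases u with
              | nil => simp
              | cons w v =>
                rw [List.getLastD_cons, List.getLastD_cons, List.getLastD_cons]
                rwa [List.getLastD_cons, List.getLastD_cons, List.getLastD_cons] at hlast
            · simp [Nat.ofDigits_cons]; ring
            · simp [diffCount_cons, diffCount_self]
          · -- 2 3 u : impossible since a = false
            exact absurd (hcA rfl) (by simp)
    · -- x = 3 : 3 r' → 2 (bump r')
      obtain ⟨haA, -, ht⟩ := hok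
      have ha : a = true := haA rfl
      subst ha
      have ht' : Ok (false, true) r' := by
        apply ok_mono _ _ _ ?_ ?_ ht <;> simp [step]
      obtain ⟨hbOk, hb3⟩ := bump_ok h3' ht'
      refine ⟨2 :: bump r', ?_, ?_, by simp, ?_, ?_, ?_, ?_⟩
      · intro y hy
        rcases List.mem_cons.mp hy with rfl | hy
        · omega
        · exact hb3 y hy
      · refine ⟨by simp, by simp, ?_⟩
        exact ok_mono _ _ _ (by simp [step]) (by simp [step]) hbOk
      · rw [List.getLastD_cons, getLastD_irrel _ (bump_ne_nil r') 2 1]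
        apply getLastD_bump
        cases r' with
        | nil => simp
        | cons w v =>
          rw [List.getLastD_cons]
          rwa [List.getLastD_cons, List.getLastD_cons] at hlast
      · rw [Nat.ofDigits_cons, Nat.ofDigits_cons, ofDigits_bump]
        ring
      · have := length_bump r'
        simp only [List.length_cons]
        omega
      · rw [diffCount_cons]
        have := diffCount_bump r'
        simp only [if_neg (by omega : ¬(3:ℕ) = 2)]
        omega

/-- Incrementing digit `i` of an extended regular counter: from an extended
regular representation `d` of `n` and an index `i ≤ ℓ`, one obtains an extended
regular representation of `n + 2^i` whose length is at most `ℓ + 1` and which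
differs from `d` in at most `4` positions. -/
theorem stmt_11 (d : List ℕ) (n i : ℕ) (hd : IsExtRegRep d n)
    (hi : i ≤ d.length) :
    ∃ d' : List ℕ, IsExtRegRep d' (n + 2 ^ i) ∧
      d'.length ≤ d.length + 1 ∧ diffCount d d' ≤ 4 := by
  obtain ⟨h3, hreg, hlastd, hval⟩ := hd
  have htd : d.take i ++ d.drop i = d := List.take_append_drop i d
  have hlen_t : (d.take i).length = i := by simp; omega
  have hOkd : Ok (false, false) d := (extReg_iff h3).mp hreg
  have hOk2 : Ok (false, false) (d.take i ++ d.drop i) := by rw [htd]; exact hOkd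
  rw [ok_append] at hOk2
  obtain ⟨hOkt, hOkr⟩ := hOk2
  have h3r : ∀ x ∈ d.drop i, x ≤ 3 := fun x hx => h3 x (List.mem_of_mem_drop hx)
  have hlast_r : (d.drop i).getLastD 1 ≠ 0 := by
    by_cases hrne : d.drop i = []
    · simp [hrne]
    · have hdne : d ≠ [] := by
        intro h
        apply hrne
        rw [h]
        simp
      rw [← htd, getLastD_append _ _ _ hrne] at hlastd
      rw [getLastD_irrel _ hrne 1 0]
      exact hlastd (by rw [← htd] at hdne; exact hdne)
  obtain ⟨r₂, k3, kOk, kne, klast, kval, klen, kdiff⟩ :=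
    key (d.drop i) (List.foldl step (false, false) (d.take i)).1
      (List.foldl step (false, false) (d.take i)).2 h3r hOkr hlast_r
  have hd3' : ∀ x ∈ d.take i ++ r₂, x ≤ 3 := by
    intro x hx
    rcases List.mem_append.mp hx with hx | hx
    · exact h3 x (List.mem_of_mem_take hx)
    · exact k3 x hx
  refine ⟨d.take i ++ r₂, ⟨hd3', ?_, ?_, ?_⟩, ?_, ?_⟩
  · apply (extReg_iff hd3').mpr
    rw [ok_append]
    exact ⟨hOkt, kOk⟩
  · intro _
    rw [getLastD_append _ _ _ kne, getLastD_irrel r₂ kne 0 1]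
    exact klast
  · rw [digitVal_ofDigits, Nat.ofDigits_append, hlen_t, kval]
    rw [digitVal_ofDigits, ← htd, Nat.ofDigits_append, hlen_t] at hval
    rw [← hval]
    ring
  · rw [List.length_append, hlen_t]
    have hlen_d : d.length = (d.take i).length + (d.drop i).length := by
      simp
      omega
    omega
  · have hdc := diffCount_prefix (d.take i) (d.drop i) r₂
    rw [htd] at hdc
    rw [hdc]
    exact kdiff
end

section
/- Let d = ⟨d_0, …, d_{ℓ−1}⟩ be an extended regular digit string. Then the sum of its digits satisfies Σ_{i<ℓ} d_i ≤ 2ℓ. -/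
/-!
Sending each `3` to the digit `≤ 1` that precedes it with only `2`'s in between is strictly
increasing: a later `3` cannot jump over an earlier one, since the digits it jumps over are `2`'s.
So there are at most as many `3`'s as `0`'s and `1`'s, and the excess of each `3` over `2` is
paid for by the deficit of a `0` or `1`.
-/

open Finset

theorem List.sum_range_getD {M : Type*} [AddCommMonoid M] (l : List M) :
    ∑ i ∈ Finset.range l.length, l.getD i 0 = l.sum := by
  induction l with
  | nil => simp
  | cons a l ih =>
    rw [length_cons, Finset.sum_range_succ', sum_cons, add_comm a]
    simp only [getD_cons_succ, getD_cons_zero, ih]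

theorem card_filter_eq_three_le_card_filter_le_one (a : ℕ → ℕ) (n : ℕ)
    (h : ∀ j < n, a j = 3 → ∃ k < j, a k ≤ 1 ∧ ∀ m, k < m → m < j → a m = 2) :
    #{j ∈ range n | a j = 3} ≤ #{j ∈ range n | a j ≤ 1} := by
  have hwit : ∀ j ∈ {j ∈ range n | a j = 3},
      ∃ k < j, a k ≤ 1 ∧ ∀ m, k < m → m < j → a m = 2 := fun j hj =>
    h j (mem_range.1 (mem_filter.1 hj).1) (mem_filter.1 hj).2
  choose! g hg_lt hg_le hg_two using hwit
  have hmono : StrictMonoOn g (({j ∈ range n | a j = 3} : Finset ℕ) : Set ℕ) := by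
    intro j hj j' hj' hjj'
    have hj3 : a j = 3 := (mem_filter.1 hj).2
    have hj_le : j ≤ g j' := by
      by_contra! hlt
      have := hg_two j' hj' j hlt hjj'
      omega
    have hj_ne : j ≠ g j' := by
      rintro rfl
      have := hg_le j' hj'
      omega
    exact (hg_lt j hj).trans (lt_of_le_of_ne hj_le hj_ne)
  refine card_le_card_of_injOn g (fun j hj => ?_) hmono.injOn
  have hjn : j < n := mem_range.1 (mem_filter.1 hj).1
  exact mem_filter.2 ⟨mem_range.2 ((hg_lt j hj).trans hjn), hg_le j hj⟩

theorem sum_range_le_two_mul_of_card_filter_le (a : ℕ → ℕ) (n : ℕ) (ha : ∀ i < n, a i ≤ 3)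
    (hcard : #{j ∈ range n | a j = 3} ≤ #{j ∈ range n | a j ≤ 1}) :
    ∑ i ∈ range n, a i ≤ 2 * n := by
  have key : ∑ i ∈ range n, (a i + if a i ≤ 1 then 1 else 0) ≤
      ∑ i ∈ range n, (2 + if a i = 3 then 1 else 0) := by
    refine sum_le_sum fun i hi => ?_
    have := ha i (mem_range.1 hi)
    split_ifs <;> omega
  rw [sum_add_distrib, sum_add_distrib, ← card_filter, ← card_filter, sum_const, card_range,
    smul_eq_mul] at key
  omega

/-- The sum of the digits of an extended regular digit string of length `ℓ`
is at most `2ℓ`. -/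
theorem stmt_15 (d : List ℕ) (hdig : ∀ x ∈ d, x ≤ 3) (hreg : ExtReg d) :
    d.sum ≤ 2 * d.length := by
  have hdigit : ∀ i < d.length, d.getD i 0 ≤ 3 := fun i hi => by
    rw [List.getD_eq_getElem _ _ hi]
    exact hdig _ (List.getElem_mem hi)
  have hcard := card_filter_eq_three_le_card_filter_le_one (d.getD · 0) d.length
    fun j hj hj3 => by
      obtain ⟨k, hkj, hk, hbetween⟩ := hreg.1 j hj hj3
      exact ⟨k, hkj, by omega, hbetween⟩
  rw [← List.sum_range_getD]
  exact sum_range_le_two_mul_of_card_filter_le _ _ hdigit hcard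
end

section
/- Let n ≥ 1 be a natural number and let d = ⟨d_0, …, d_{ℓ−1}⟩ be an extended regular representation of n. Then the sum of the digits satisfies Σ_{i<ℓ} d_i ≤ 2·(⌊log₂ n⌋ + 1). -/
open Finset

lemma List.sum_eq_sum_range_getD (d : List ℕ) :
    d.sum = ∑ i ∈ Finset.range d.length, d.getD i 0 := by
  induction d with
  | nil => simp
  | cons a t ih => simp [Finset.sum_range_succ', ih, Nat.add_comm]

lemma List.getD_le_of_forall_le {d : List ℕ} {b : ℕ} (hle : ∀ x ∈ d, x ≤ b) (i : ℕ) :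
    d.getD i 0 ≤ b := by
  by_cases hi : i < d.length
  · exact hle _ (by rw [List.getD_eq_getElem d 0 hi]; exact List.getElem_mem hi)
  · rw [List.getD_eq_default d 0 (by omega)]
    exact Nat.zero_le _

lemma length_le_log_digitVal_add_one {d : List ℕ} (hlast : d ≠ [] → d.getLastD 0 ≠ 0) :
    d.length ≤ Nat.log 2 (digitVal d) + 1 := by
  rcases d.eq_nil_or_concat' with rfl | ⟨t, a, rfl⟩
  · simp
  have ha : a ≠ 0 := by simpa using hlast (by simp)
  have hpow : 2 ^ t.length ≤ digitVal (t ++ [a]) :=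
    calc 2 ^ t.length ≤ (t ++ [a]).getD t.length 0 * 2 ^ t.length := by
          simpa using Nat.one_le_iff_ne_zero.mpr ha
      _ ≤ digitVal (t ++ [a]) :=
          single_le_sum (f := fun i => (t ++ [a]).getD i 0 * 2 ^ i)
            (fun _ _ => Nat.zero_le _) (mem_range.mpr (by simp))
  simpa using Nat.le_log_of_pow_le (by norm_num) hpow

lemma card_filter_eq_three_le_card_filter_le_one_s17 {d : List ℕ} (hd : ExtReg d) :
    #{j ∈ range d.length | d.getD j 0 = 3} ≤ #{k ∈ range d.length | d.getD k 0 ≤ 1} := by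
  refine card_le_card_of_forall_subsingleton
    (fun j k => k < j ∧ ∀ m, k < m → m < j → d.getD m 0 = 2) ?_ ?_
  · intro j hj
    simp only [mem_filter, mem_range] at hj
    obtain ⟨k, hkj, hk, hbetween⟩ := hd.1 j hj.1 hj.2
    exact ⟨k, by simp only [mem_filter, mem_range]; omega, hkj, hbetween⟩
  · have key : ∀ j₁ j₂ k, d.getD j₁ 0 = 3 → k < j₁ → j₁ < j₂ →
        (∀ m, k < m → m < j₂ → d.getD m 0 = 2) → False := fun j₁ j₂ k h₁ hk hj hbetween => by
      have := (hbetween j₁ hk hj).symm.trans h₁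
      omega
    rintro k - j₁ ⟨hj₁, hkj₁, hb₁⟩ j₂ ⟨hj₂, hkj₂, hb₂⟩
    rw [mem_filter] at hj₁ hj₂
    rcases lt_trichotomy j₁ j₂ with h | h | h
    · exact (key j₁ j₂ k hj₁.2 hkj₁ h hb₂).elim
    · exact h
    · exact (key j₂ j₁ k hj₂.2 hkj₂ h hb₁).elim

lemma sum_le_two_mul_length {d : List ℕ} (hle : ∀ x ∈ d, x ≤ 3) (hd : ExtReg d) :
    d.sum ≤ 2 * d.length := by
  have hcard := card_filter_eq_three_le_card_filter_le_one_s17 hd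
  have hdigit : d.sum + #{k ∈ range d.length | d.getD k 0 ≤ 1}
      ≤ 2 * d.length + #{j ∈ range d.length | d.getD j 0 = 3} := by
    rw [List.sum_eq_sum_range_getD, Finset.card_filter, Finset.card_filter,
      ← Finset.sum_add_distrib]
    calc ∑ i ∈ range d.length, (d.getD i 0 + if d.getD i 0 ≤ 1 then 1 else 0)
        ≤ ∑ i ∈ range d.length, (2 + if d.getD i 0 = 3 then 1 else 0) := by
          refine sum_le_sum fun i _ => ?_
          have := List.getD_le_of_forall_le hle i
          split_ifs <;> omega
      _ = 2 * d.length + ∑ i ∈ range d.length, (if d.getD i 0 = 3 then 1 else 0) := by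
          rw [Finset.sum_add_distrib, sum_const, card_range, smul_eq_mul, Nat.mul_comm]
  omega

theorem stmt_17_general (n : ℕ) (d : List ℕ) (hd : IsExtRegRep d n) :
    d.sum ≤ 2 * (Nat.log 2 n + 1) := by
  obtain ⟨hle, hreg, hlast, rfl⟩ := hd
  calc d.sum ≤ 2 * d.length := sum_le_two_mul_length hle hreg
    _ ≤ 2 * (Nat.log 2 (digitVal d) + 1) := by
      gcongr
      exact length_le_log_digitVal_add_one hlast

/-- For `n ≥ 1`, the digit sum of an extended regular representation of `n`
is at most `2·(⌊log₂ n⌋ + 1)`. -/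
theorem stmt_17 (n : ℕ) (hn : 1 ≤ n) (d : List ℕ) (hd : IsExtRegRep d n) :
    d.sum ≤ 2 * (Nat.log 2 n + 1) :=
  stmt_17_general n d hd
end
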